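/- With p = E_u/N, the per-user SNR expression SNR(N) = (p(M−K)(N a + γ)²) / ((p·s(N) + σ²)(N a + γ + σ²/(τp))), where s(N) = ∑_{i=1}^K 1/(1/(N a_i + γ_i) + τp/σ²), converges as N → ∞ to E_u(M−K)·a² / ((∑_i E_u/(τE_u/σ² + 1/a_i) + σ²)(a + σ²/(τE_u))). -/

import Mathlib

/-! With `p = E_u/N`, both `1/(N aᵢ + γᵢ)` and `τp/σ²` are of order `1/N`, so every factor of
the SNR scales linearly in `N` and the powers of `N` cancel. What remains is a rational function
of `t = 1/N` whose denominators stay away from zero at `t = 0` because the `aᵢ` are positive;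
the limit is its value there. -/

open Filter Topology

lemma one_div_one_div_mul_add_div {K : Type*} [Field K] (N b c : K) :
    1 / (1 / (N * b) + c / N) = N / (c + 1 / b) := by
  rw [mul_comm, ← div_div, ← add_div, one_div_div, add_comm]

section ScaledSNR

variable {ι : Type*} [Fintype ι] (a γ : ι → ℝ) (k : ι) (m σ2 τ Eu : ℝ)

noncomputable def scaledSNR (t : ℝ) : ℝ :=
  Eu * m * (a k + γ k * t) ^ 2 /
    ((∑ i, Eu / (τ * Eu / σ2 + 1 / (a i + γ i * t)) + σ2) *
      (a k + γ k * t + σ2 / (τ * Eu)))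

lemma snr_eq_scaledSNR_inv {N : ℝ} (hN : N ≠ 0) :
    Eu / N * m * (N * a k + γ k) ^ 2 /
        ((Eu / N * ∑ i, 1 / (1 / (N * a i + γ i) + τ * (Eu / N) / σ2) + σ2) *
          (N * a k + γ k + σ2 / (τ * (Eu / N)))) =
      scaledSNR a γ k m σ2 τ Eu N⁻¹ := by
  have hscale : ∀ i, N * a i + γ i = N * (a i + γ i * N⁻¹) := fun i => by
    field_simp
  have hsum : Eu / N * ∑ i, 1 / (1 / (N * a i + γ i) + τ * (Eu / N) / σ2) =
      ∑ i, Eu / (τ * Eu / σ2 + 1 / (a i + γ i * N⁻¹)) := by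
    rw [Finset.mul_sum]
    refine Finset.sum_congr rfl fun i _ => ?_
    rw [hscale, show τ * (Eu / N) / σ2 = τ * Eu / σ2 / N by ring,
      one_div_one_div_mul_add_div]
    field_simp
  rw [hsum, scaledSNR, hscale k]
  field_simp

lemma continuousAt_scaledSNR_zero (ha : ∀ i, 0 < a i) (hσ2 : 0 < σ2) (hτ : 0 < τ)
    (hEu : 0 < Eu) : ContinuousAt (scaledSNR a γ k m σ2 τ Eu) 0 := by
  have hlin : ∀ i, ContinuousAt (fun t : ℝ => a i + γ i * t) 0 := fun i => by fun_prop
  have hterm : ∀ i,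
      ContinuousAt (fun t : ℝ => Eu / (τ * Eu / σ2 + 1 / (a i + γ i * t))) 0 := fun i => by
    have hai := ha i
    refine continuousAt_const.div (continuousAt_const.add
      (continuousAt_const.div (hlin i) (by simpa using hai.ne'))) ?_
    simp only [mul_zero, add_zero]
    positivity
  have hsum_nonneg : 0 ≤ ∑ i, Eu / (τ * Eu / σ2 + 1 / a i) :=
    Finset.sum_nonneg fun i _ => by have := ha i; positivity
  have hak := ha k
  refine ((continuousAt_const.mul ((hlin k).pow 2)).div
    (((tendsto_finsetSum _ fun i _ => hterm i).add continuousAt_const).mul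
      ((hlin k).add continuousAt_const)) ?_)
  simp only [mul_zero, add_zero]
  positivity

end ScaledSNR

theorem power_scaling_law_general (M K : ℕ)
    (aV : Fin K → ℝ) (γV : Fin K → ℝ) (k : Fin K)
    (ha : ∀ i, 0 < aV i)
    (σ2 τ Eu : ℝ) (hσ2 : 0 < σ2) (hτ : 0 < τ) (hEu : 0 < Eu) :
    Tendsto
      (fun N : ℝ =>
        let p := Eu / N
        let s := ∑ i, 1 / (1 / (N * aV i + γV i) + τ * p / σ2)
        (p * ((M : ℝ) - K) * (N * aV k + γV k) ^ 2) /
          ((p * s + σ2) * (N * aV k + γV k + σ2 / (τ * p))))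
      atTop
      (𝓝 (Eu * ((M : ℝ) - K) * (aV k) ^ 2 /
        ((∑ i, Eu / (τ * Eu / σ2 + 1 / aV i) + σ2) * (aV k + σ2 / (τ * Eu))))) := by
  have hlim := (continuousAt_scaledSNR_zero aV γV k ((M : ℝ) - K) σ2 τ Eu ha hσ2 hτ hEu).tendsto
    |>.comp tendsto_inv_atTop_zero
  simp only [scaledSNR, mul_zero, add_zero] at hlim
  refine hlim.congr' ?_
  filter_upwards [eventually_ne_atTop 0] with N hN
  exact (snr_eq_scaledSNR_inv aV γV k _ σ2 τ Eu hN).symm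

/-- Power scaling law: with `p = E_u/N`, the per-user SNR
`SNR(N) = p(M−K)(Na+γ)² / ((p·s(N)+σ²)(Na+γ+σ²/(τp)))`, with
`s(N) = ∑ᵢ 1/(1/(Naᵢ+γᵢ) + τp/σ²)`, converges as `N → ∞` to
`E_u(M−K)a² / ((∑ᵢ E_u/(τE_u/σ² + 1/aᵢ) + σ²)(a + σ²/(τE_u)))`. -/
theorem power_scaling_law (M K : ℕ) (hMK : K < M)
    (aV : Fin K → ℝ) (γV : Fin K → ℝ) (k : Fin K)
    (ha : ∀ i, 0 < aV i) (hγ : ∀ i, 0 ≤ γV i)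
    (σ2 τ Eu : ℝ) (hσ2 : 0 < σ2) (hτ : 0 < τ) (hEu : 0 < Eu) :
    Tendsto
      (fun N : ℝ =>
        let p := Eu / N
        let s := ∑ i, 1 / (1 / (N * aV i + γV i) + τ * p / σ2)
        (p * ((M : ℝ) - K) * (N * aV k + γV k) ^ 2) /
          ((p * s + σ2) * (N * aV k + γV k + σ2 / (τ * p))))
      atTop
      (𝓝 (Eu * ((M : ℝ) - K) * (aV k) ^ 2 /
        ((∑ i, Eu / (τ * Eu / σ2 + 1 / aV i) + σ2) * (aV k + σ2 / (τ * Eu))))) :=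
  power_scaling_law_general M K aV γV k ha σ2 τ Eu hσ2 hτ hEu
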